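/- On a weak almost para-S-manifold, the covariant derivative of each ξ_i satisfies ∇ ξ_i = Q^{-1} f h*_i - f, where h*_i is the g-adjoint of h_i = (1/2) £_{ξ_i} f. -/

import Mathlib

open scoped BigOperators

noncomputable section

variable (C V : Type*) [CommRing C] [Algebra ℝ C] [AddCommGroup V]
  [Module ℝ V] [Module C V] [IsScalarTower ℝ C V]

/-- A metric weak para-f-structure on a manifold, modelled algebraically:
`C` plays the role of the ring of smooth functions, `V` the `C`-module of vector fields
with Lie bracket `b` and derivation action `act` of vector fields on functions,
`g` is a compatible pseudo-Riemannian metric (with `f` of rank `2n`, encoded by `hrank`)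
and `nabla` its Levi-Civita connection (torsion-free and metric). -/
structure MWPF (p : ℕ) where
  f : V →ₗ[C] V
  Q : V →ₗ[C] V
  ξ : Fin p → V
  η : Fin p → V →ₗ[C] C
  g : V →ₗ[C] V →ₗ[C] C
  b : V → V → V
  act : V → C → C
  nabla : V → V → V
  hQbij : Function.Bijective Q
  hf2 : ∀ X, f (f X) = Q X - ∑ i, η i X • ξ i
  hf3 : ∀ X, f (f (f X)) = f (Q X)
  hetaxi : ∀ i j, η i (ξ j) = if i = j then (1 : C) else 0
  hQxi : ∀ i, Q (ξ i) = ξ i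
  hrange : ∀ X : V, X ∈ LinearMap.range f ↔ ∀ i, η i X = 0
  hgsymm : ∀ X Y, g X Y = g Y X
  hgnondeg : ∀ X, (∀ Y, g X Y = 0) → X = 0
  hrank : ∀ Z, (∀ i, η i Z = 0) → (∀ Y, g Z (f Y) = 0) → Z = 0
  hgcompat : ∀ X Y, g (f X) (f Y) = -(g X (Q Y)) + ∑ i, η i X * η i Y
  hbskew : ∀ X Y, b X Y = - b Y X
  hbaddl : ∀ X Y Z, b (X + Y) Z = b X Z + b Y Z
  hjacobi : ∀ X Y Z, b X (b Y Z) + b Y (b Z X) + b Z (b X Y) = 0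
  hactadd : ∀ X a c, act X (a + c) = act X a + act X c
  hactmul : ∀ X a c, act X (a * c) = act X a * c + a * act X c
  hactX : ∀ (a : C) X Y c, act (a • X + Y) c = a * act X c + act Y c
  hbleib : ∀ X (a : C) Y, b X (a • Y) = act X a • Y + a • b X Y
  hnab1 : ∀ (a : C) X X' Y, nabla (a • X + X') Y = a • nabla X Y + nabla X' Y
  hnabadd : ∀ X Y Z, nabla X (Y + Z) = nabla X Y + nabla X Z
  hnableib : ∀ X (a : C) Y, nabla X (a • Y) = act X a • Y + a • nabla X Y
  htors : ∀ X Y, nabla X Y - nabla Y X = b X Y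
  hmetric : ∀ X Y Z, act X (g Y Z) = g (nabla X Y) Z + g Y (nabla X Z)

namespace MWPF

variable {C V} {p : ℕ} (s : MWPF C V p)

/-- The fundamental 2-form `Φ(X,Y) = g(X, fY)`. -/
def Phi (X Y : V) : C := s.g X (s.f Y)

/-- `dη^i(X,Y) = (1/2)(X(η^i Y) - Y(η^i X) - η^i [X,Y])`. -/
def dEta (i : Fin p) (X Y : V) : C :=
  (2⁻¹ : ℝ) • (s.act X (s.η i Y) - s.act Y (s.η i X) - s.η i (s.b X Y))

/-- The Nijenhuis torsion `[f,f]`. -/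
def Nij (X Y : V) : V :=
  s.f (s.f (s.b X Y)) + s.b (s.f X) (s.f Y) - s.f (s.b (s.f X) Y) - s.f (s.b X (s.f Y))

/-- `N^(1)(X,Y) = [f,f](X,Y) - 2 Σ_i dη^i(X,Y) ξ_i`. -/
def N1 (X Y : V) : V := s.Nij X Y - (2 : ℝ) • ∑ i, s.dEta i X Y • s.ξ i

/-- The difference tensor `Q̃ = Q - id`. -/
def Qt (X : V) : V := s.Q X - X

/-- The Lie derivative of `f`: `(£_Z f)X = [Z, fX] - f[Z,X]`. -/
def Lief (Z X : V) : V := s.b Z (s.f X) - s.f (s.b Z X)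

/-- The Lie derivative of `g`: `(£_Z g)(X,Y) = Z(g(X,Y)) - g([Z,X],Y) - g(X,[Z,Y])`. -/
def Lieg (Z X Y : V) : C := s.act Z (s.g X Y) - s.g (s.b Z X) Y - s.g X (s.b Z Y)

/-- `N^(2)_i(X,Y) = (£_{fX} η^i)Y - (£_{fY} η^i)X`. -/
def N2 (i : Fin p) (X Y : V) : C :=
  (s.act (s.f X) (s.η i Y) - s.η i (s.b (s.f X) Y))
    - (s.act (s.f Y) (s.η i X) - s.η i (s.b (s.f Y) X))

/-- The exterior differential of the fundamental 2-form. -/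
def dPhi (X Y Z : V) : C := (3⁻¹ : ℝ) •
  (s.act X (s.Phi Y Z) + s.act Y (s.Phi Z X) + s.act Z (s.Phi X Y)
    - s.Phi (s.b X Y) Z - s.Phi (s.b Z X) Y - s.Phi (s.b Y Z) X)

/-- The tensor `h_i = (1/2) £_{ξ_i} f`. -/
def hmap (i : Fin p) (X : V) : V := (2⁻¹ : ℝ) • s.Lief (s.ξ i) X

/-- The tensor `N^(5)`. -/
def N5 (X Y Z : V) : C :=
  s.act (s.f Z) (s.g X (s.Qt Y)) - s.act (s.f Y) (s.g X (s.Qt Z))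
    + s.g (s.b X (s.f Z)) (s.Qt Y) - s.g (s.b X (s.f Y)) (s.Qt Z)
    + s.g (s.b Y (s.f Z) - s.b Z (s.f Y) - s.f (s.b Y Z)) (s.Qt X)

/-- The curvature tensor of `nabla`. -/
def Rm (X Y Z : V) : V :=
  s.nabla X (s.nabla Y Z) - s.nabla Y (s.nabla X Z) - s.nabla (s.b X Y) Z

end MWPF

/-!
Pair both sides with `g` and use nondegeneracy. Since `g(ξ_i, ·) = η^i`, torsion-freeness and
metricity turn `dη^i = Φ` into `2 g(∇_X ξ_i, Z) = (£_{ξ_i} g)(X, Z) + 2 Φ(X, Z)`; take `Z = QY`.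
Write `QY = f²Y + Σ_j η^j(Y) ξ_j`. The `ξ_j` commute and preserve every `η^k`, so `£_{ξ_i} g`
vanishes on them, while `£_{ξ_i} Φ = 0` because `Φ = dη^i` and `£_{ξ_i} η^i = 0`. Hence
`(£_{ξ_i} g)(X, QY) = -g(X, (£_{ξ_i} f)(fY)) = -2 g(h*_i X, fY) = 2 g(f h*_i X, Y)`, and the
`Φ`-term is `-2 g(QfX, Y)` by the skew-symmetry of `f`.
-/

lemma eq_of_two_mul_eq {R : Type*} [Ring R] [Algebra ℝ R] {a c : R} (h : 2 * a = 2 * c) :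
    a = c := by
  have h2 := (two_ne_zero : (2 : ℝ) ≠ 0).isUnit.map (algebraMap ℝ R)
  rw [map_ofNat] at h2
  exact h2.mul_left_cancel h

namespace MWPF

variable {C V}
omit [Algebra ℝ C] [Module ℝ V] [IsScalarTower ℝ C V]
variable {p : ℕ} (s : MWPF C V p)

lemma act_zero (X : V) : s.act X 0 = 0 :=
  (AddMonoidHom.mk' (s.act X) (s.hactadd X)).map_zero

lemma act_sub (X : V) (a c : C) : s.act X (a - c) = s.act X a - s.act X c :=
  (AddMonoidHom.mk' (s.act X) (s.hactadd X)).map_sub a c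

lemma act_one (X : V) : s.act X 1 = 0 := by
  simpa using s.hactmul X 1 1

lemma b_add_right (X A B : V) : s.b X (A + B) = s.b X A + s.b X B := by
  rw [s.hbskew X, s.hbaddl, s.hbskew A X, s.hbskew B X]
  abel

lemma b_neg_right (X A : V) : s.b X (-A) = -s.b X A :=
  (AddMonoidHom.mk' (s.b X) (s.b_add_right X)).map_neg A

lemma b_b (A B Z : V) : s.b (s.b A B) Z = s.b A (s.b B Z) - s.b B (s.b A Z) := by
  have h := s.hjacobi A B Z
  rw [s.hbskew Z A, s.b_neg_right, s.hbskew Z (s.b A B)] at h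
  rw [← sub_eq_zero, ← neg_eq_zero, ← h]
  abel

/-- Test the Jacobi identity on `c • ξ i` and read off the `ξ i`-component with `η i`. -/
lemma act_b (i : Fin p) (X Y : V) (c : C) :
    s.act (s.b X Y) c = s.act X (s.act Y c) - s.act Y (s.act X c) := by
  have h := congrArg (s.η i) (s.b_b X Y (c • s.ξ i))
  simp only [s.hbleib, s.b_add_right, s.b_b X Y (s.ξ i), map_add, map_sub, map_smul,
    smul_eq_mul, s.hetaxi, if_true, mul_one] at h
  linear_combination h

lemma act_two_mul (X : V) (a : C) : s.act X (2 * a) = 2 * s.act X a := by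
  rw [two_mul, s.hactadd, two_mul]

lemma act_b_eta {k : Fin p} {A B : V} (hA : ∀ Y, s.act A (s.η k Y) = s.η k (s.b A Y))
    (hB : ∀ Y, s.act B (s.η k Y) = s.η k (s.b B Y)) (Y : V) :
    s.act (s.b A B) (s.η k Y) = s.η k (s.b (s.b A B) Y) := by
  rw [s.act_b k, hB, hA, hA, hB, s.b_b, map_sub]

lemma g_Q_left (A B : V) : s.g (s.Q A) B = s.g A (s.Q B) := by
  have h1 := s.hgcompat A B
  have h2 := s.hgcompat B A
  rw [s.hgsymm (s.f B), s.hgsymm B] at h2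
  simp only [mul_comm (s.η _ B)] at h2
  linear_combination h2 - h1

lemma f_f_xi (j : Fin p) : s.f (s.f (s.ξ j)) = 0 := by
  simp [s.hf2, s.hQxi, s.hetaxi, ite_smul]

lemma eta_f (j : Fin p) (Y : V) : s.η j (s.f Y) = 0 :=
  (s.hrange (s.f Y)).mp ⟨Y, rfl⟩ j

lemma Lieg_add_right (Z X A B : V) : s.Lieg Z X (A + B) = s.Lieg Z X A + s.Lieg Z X B := by
  simp only [Lieg, map_add, s.b_add_right, s.hactadd]
  ring

lemma Lieg_eq_g_nabla (Z X Y : V) :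
    s.Lieg Z X Y = s.g (s.nabla X Z) Y + s.g (s.nabla Y Z) X := by
  have tX := congrArg (s.g · Y) (s.htors Z X)
  have tY := congrArg (s.g X) (s.htors Z Y)
  simp only [map_sub, LinearMap.sub_apply] at tX tY
  rw [Lieg, s.hmetric, ← tX, ← tY, s.hgsymm X (s.nabla Y Z)]
  ring

section AlmostParaS

variable [Algebra ℝ C]

lemma two_mul_dEta (i : Fin p) (A B : V) :
    2 * s.dEta i A B = s.act A (s.η i B) - s.act B (s.η i A) - s.η i (s.b A B) := by
  rw [dEta, Algebra.smul_def, ← mul_assoc, ← map_ofNat (algebraMap ℝ C) 2, ← map_mul]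
  norm_num

variable (hS : ∀ (i : Fin p) (X Y : V), s.dEta i X Y = s.Phi X Y)
include hS

lemma two_mul_Phi (i : Fin p) (A B : V) :
    2 * s.Phi A B = s.act A (s.η i B) - s.act B (s.η i A) - s.η i (s.b A B) :=
  hS i A B ▸ s.two_mul_dEta i A B

lemma g_f_left (i : Fin p) (A B : V) : s.g (s.f A) B = -s.g A (s.f B) := by
  refine eq_of_two_mul_eq ?_
  have hA := s.two_mul_Phi hS i A B
  have hB := s.two_mul_Phi hS i B A
  rw [s.hbskew B A, map_neg] at hB
  rw [s.hgsymm, ← Phi, ← Phi]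
  linear_combination hB + hA

lemma g_xi (j : Fin p) (Y : V) : s.g (s.ξ j) Y = s.η j Y := by
  have hf := s.g_f_left hS j (s.f (s.ξ j)) Y
  rw [s.f_f_xi, map_zero, LinearMap.zero_apply] at hf
  have h := s.hgcompat (s.ξ j) Y
  simp only [s.hetaxi, ite_mul, one_mul, zero_mul, Finset.sum_ite_eq', Finset.mem_univ,
    if_true, ← s.g_Q_left, s.hQxi] at h
  linear_combination h - hf

lemma act_xi_eta (j k : Fin p) (Y : V) :
    s.act (s.ξ j) (s.η k Y) = s.η k (s.b (s.ξ j) Y) := by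
  have h := s.two_mul_Phi hS k (s.ξ j) Y
  rw [Phi, s.g_xi hS, s.eta_f, s.hetaxi] at h
  split_ifs at h <;> simp only [s.act_one, s.act_zero] at h <;> linear_combination -h

lemma b_xi_xi (i j : Fin p) : s.b (s.ξ i) (s.ξ j) = 0 := by
  have heta (k : Fin p) : s.η k (s.b (s.ξ i) (s.ξ j)) = 0 := by
    rw [← s.act_xi_eta hS, s.hetaxi]
    split_ifs <;> simp [s.act_one, s.act_zero]
  refine s.hrank _ heta fun Z => eq_of_two_mul_eq ?_
  rw [mul_zero, ← Phi, s.two_mul_Phi hS i, heta, s.act_zero,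
    s.act_b_eta (s.act_xi_eta hS i i) (s.act_xi_eta hS j i)]
  ring

/-- `£_W Φ = 0` whenever `£_W η^i = 0`, since `Φ = dη^i` and `£_W` commutes with `d`. -/
lemma act_Phi {i : Fin p} {W : V} (hW : ∀ Y, s.act W (s.η i Y) = s.η i (s.b W Y)) (A B : V) :
    s.act W (s.Phi A B) = s.Phi (s.b W A) B + s.Phi A (s.b W B) := by
  refine eq_of_two_mul_eq ?_
  have hAB := congrArg (s.act W) (s.two_mul_Phi hS i A B)
  have hWA := s.two_mul_Phi hS i (s.b W A) B
  have hWB := s.two_mul_Phi hS i A (s.b W B)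
  rw [s.act_two_mul, s.act_sub, s.act_sub, hW] at hAB
  have hWAB := s.act_b i W A (s.η i B)
  have hWBA := s.act_b i W B (s.η i A)
  rw [hW] at hWAB hWBA
  have hjac := congrArg (s.η i) (s.b_b W A B)
  rw [map_sub] at hjac
  linear_combination hAB - hWA - hWB - hWAB + hWBA + hjac

lemma Lieg_xi_smul_xi (i j : Fin p) (X : V) (c : C) : s.Lieg (s.ξ i) X (c • s.ξ j) = 0 := by
  rw [Lieg, s.hbleib, s.b_xi_xi hS, smul_zero, add_zero]
  simp only [map_smul, smul_eq_mul, s.hgsymm _ (s.ξ j), s.g_xi hS, s.hactmul,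
    s.act_xi_eta hS]
  ring

lemma Lieg_xi_Q (i : Fin p) (X Y : V) :
    s.Lieg (s.ξ i) X (s.Q Y) = -s.g X (s.Lief (s.ξ i) (s.f Y)) := by
  have hQ : s.Q Y = s.f (s.f Y) + ∑ j, s.η j Y • s.ξ j := by
    rw [s.hf2]
    abel
  have hsum : s.Lieg (s.ξ i) X (∑ j, s.η j Y • s.ξ j) = 0 :=
    (map_sum (AddMonoidHom.mk' _ (s.Lieg_add_right (s.ξ i) X)) _ _).trans
      (Finset.sum_eq_zero fun j _ => s.Lieg_xi_smul_xi hS i j X _)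
  have hΦ := s.act_Phi hS (s.act_xi_eta hS i i) X (s.f Y)
  rw [hQ, s.Lieg_add_right, hsum, add_zero, Lieg, Lief, map_sub]
  simp only [Phi] at hΦ
  linear_combination hΦ

lemma two_mul_g_nabla_xi (i : Fin p) (X Z : V) :
    2 * s.g (s.nabla X (s.ξ i)) Z = s.Lieg (s.ξ i) X Z + 2 * s.Phi X Z := by
  have hΦ := s.two_mul_Phi hS i X Z
  have hX := s.hmetric X (s.ξ i) Z
  have hZ := s.hmetric Z (s.ξ i) X
  have hXZ := congrArg (s.g (s.ξ i)) (s.htors X Z)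
  rw [map_sub] at hXZ
  simp only [s.g_xi hS] at hX hZ hXZ
  rw [hΦ, s.Lieg_eq_g_nabla, hX, hZ, ← hXZ]
  ring

end AlmostParaS

lemma g_Lief [Algebra ℝ C] [Module ℝ V] [IsScalarTower ℝ C V] (i : Fin p) (X W : V) :
    s.g X (s.Lief (s.ξ i) W) = 2 * s.g X (s.hmap i W) := by
  rw [hmap, LinearMap.map_smul_of_tower, Algebra.smul_def, ← mul_assoc,
    ← map_ofNat (algebraMap ℝ C) 2, ← map_mul]
  norm_num

end MWPF

/-- The paper's `∇ ξ_i = Q⁻¹ f h*_i - f`, with `Q` applied to both sides. -/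
theorem paraS_nabla_xi {C V : Type*} [CommRing C] [Algebra ℝ C] [AddCommGroup V]
    [Module ℝ V] [Module C V] [IsScalarTower ℝ C V] {p : ℕ} (s : MWPF C V p)
    (hS : ∀ (i : Fin p) (X Y : V), s.dEta i X Y = s.Phi X Y)
    (i : Fin p) (hstar : V → V)
    (hadj : ∀ X Y, s.g (hstar X) Y = s.g X (s.hmap i Y)) :
    ∀ X : V, s.Q (s.nabla X (s.ξ i)) + s.Q (s.f X) = s.f (hstar X) := by
  intro X
  refine sub_eq_zero.mp (s.hgnondeg _ fun Y => eq_of_two_mul_eq ?_)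
  have hnabla := s.two_mul_g_nabla_xi hS i X (s.Q Y)
  rw [s.Lieg_xi_Q hS, s.g_Lief, ← hadj, ← s.g_Q_left, MWPF.Phi] at hnabla
  have hfh := s.g_f_left hS i (hstar X) Y
  have hfX := s.g_f_left hS i X (s.Q Y)
  have hQfX := s.g_Q_left (s.f X) Y
  simp only [map_add, map_sub, LinearMap.add_apply, LinearMap.sub_apply]
  linear_combination hnabla + 2 * hQfX + 2 * hfX - 2 * hfh
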